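/- arXiv:2309.10509 — 4 statements merged into one kernel-verified Lean document; each statement's English description precedes it below -/
import Mathlib

section
/- Combining concentration with bit selection: if C on ∏_n{0,…,2^{K_n}−1} has a unique minimizer x_opt, and Ω_{0,m}(τ) = ∑_i B^{D_0,m}_i P_i(τ) with P_i(τ) = ∑_{x : x_0 = i} e^{−τ C(x)}, then for all sufficiently large τ, H(Ω_{0,m}(τ)) equals the m-th bit of x_opt,0. -/
/-- Concentration combined with bit selection: for a cost with unique minimizer on a
product of power-of-two ranges, for all sufficiently large `τ` the Heaviside step of
the signed partial trace `Ω_{0,m}(τ)` equals the `m`-th bit of the optimal first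
coordinate. -/
theorem signed_trace_bit_extraction (N : ℕ) (K : Fin (N + 1) → ℕ)
    (C : (∀ n, Fin (2 ^ K n)) → ℝ) (xopt : ∀ n, Fin (2 ^ K n))
    (hopt : ∀ y, y ≠ xopt → C xopt < C y) (m : ℕ) :
    ∃ τ0 : ℝ, ∀ τ > τ0,
      (if 0 < ∑ i : Fin (2 ^ K 0),
          (if Nat.testBit (i : ℕ) m then (1 : ℝ) else -1) *
            ∑ x : ∀ n, Fin (2 ^ K n), if x 0 = i then Real.exp (-τ * C x) else 0
        then (1 : ℝ) else 0)
        = if Nat.testBit ((xopt 0 : ℕ)) m then 1 else 0 := by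
  classical
  set g : (∀ n, Fin (2 ^ K n)) → ℝ :=
    fun x => if Nat.testBit ((x 0 : ℕ)) m then (1 : ℝ) else -1 with hg
  have hΩ : ∀ τ : ℝ, (∑ i : Fin (2 ^ K 0),
      (if Nat.testBit (i : ℕ) m then (1 : ℝ) else -1) *
        ∑ x : ∀ n, Fin (2 ^ K n), if x 0 = i then Real.exp (-τ * C x) else 0)
      = ∑ x : ∀ n, Fin (2 ^ K n), g x * Real.exp (-τ * C x) := by
    intro τ
    simp_rw [Finset.mul_sum]
    rw [Finset.sum_comm]
    refine Finset.sum_congr rfl fun x _ => ?_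
    rw [Finset.sum_eq_single (x 0)]
    · simp [hg]
    · intro i _ hi
      rw [if_neg (Ne.symm hi), mul_zero]
    · intro h
      exact absurd (Finset.mem_univ _) h
  set T : Finset (∀ n, Fin (2 ^ K n)) := Finset.univ.erase xopt with hT
  have h0 : Filter.Tendsto (fun τ : ℝ => ∑ x ∈ T, Real.exp (-τ * (C x - C xopt)))
      Filter.atTop (nhds 0) := by
    have : Filter.Tendsto (fun τ : ℝ => ∑ x ∈ T, Real.exp (-τ * (C x - C xopt)))
        Filter.atTop (nhds (∑ _x ∈ T, (0 : ℝ))) := by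
      refine tendsto_finset_sum T fun x hx => ?_
      have hd : 0 < C x - C xopt := sub_pos.mpr (hopt x (Finset.ne_of_mem_erase hx))
      have h1 : Filter.Tendsto (fun τ : ℝ => -τ * (C x - C xopt)) Filter.atTop Filter.atBot := by
        have h2 := Filter.tendsto_id.atTop_mul_const hd
        simpa [neg_mul] using Filter.tendsto_neg_atBot_iff.mpr h2
      exact Real.tendsto_exp_atBot.comp h1
    simpa using this
  have hev := h0.eventually_lt_const (by norm_num : (0:ℝ) < 1)
  obtain ⟨τ0, hτ0⟩ := Filter.eventually_atTop.mp hev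
  refine ⟨τ0, fun τ hτ => ?_⟩
  have hsum : ∑ x ∈ T, Real.exp (-τ * (C x - C xopt)) < 1 := hτ0 τ hτ.le
  have habs : |∑ x ∈ T, g x * Real.exp (-τ * C x)| < Real.exp (-τ * C xopt) := by
    calc |∑ x ∈ T, g x * Real.exp (-τ * C x)|
        ≤ ∑ x ∈ T, |g x * Real.exp (-τ * C x)| := Finset.abs_sum_le_sum_abs _ _
      _ = ∑ x ∈ T, Real.exp (-τ * (C x - C xopt)) * Real.exp (-τ * C xopt) := by
          refine Finset.sum_congr rfl fun x hx => ?_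
          have hgx : |g x| = 1 := by
            by_cases h : Nat.testBit ((x 0 : ℕ)) m <;> simp [hg, h]
          rw [abs_mul, hgx, one_mul, abs_of_pos (Real.exp_pos _), ← Real.exp_add]
          congr 1
          ring
      _ = (∑ x ∈ T, Real.exp (-τ * (C x - C xopt))) * Real.exp (-τ * C xopt) := by
          rw [Finset.sum_mul]
      _ < 1 * Real.exp (-τ * C xopt) :=
          mul_lt_mul_of_pos_right hsum (Real.exp_pos _)
      _ = Real.exp (-τ * C xopt) := one_mul _
  have hsplit : (∑ x : ∀ n, Fin (2 ^ K n), g x * Real.exp (-τ * C x))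
      = g xopt * Real.exp (-τ * C xopt) + ∑ x ∈ T, g x * Real.exp (-τ * C x) := by
    rw [← Finset.add_sum_erase _ _ (Finset.mem_univ xopt)]
  rw [hΩ τ, hsplit]
  by_cases hb : Nat.testBit ((xopt 0 : ℕ)) m
  · have hg1 : g xopt = 1 := by simp [hg, hb]
    have hpos : 0 < g xopt * Real.exp (-τ * C xopt) + ∑ x ∈ T, g x * Real.exp (-τ * C x) := by
      rw [hg1, one_mul]
      have := neg_lt_of_abs_lt habs
      linarith
    rw [if_pos hpos, if_pos hb]
  · have hg1 : g xopt = -1 := by simp [hg, hb]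
    have hneg : g xopt * Real.exp (-τ * C xopt) + ∑ x ∈ T, g x * Real.exp (-τ * C x) < 0 := by
      rw [hg1]
      have := lt_of_abs_lt habs
      linarith
    rw [if_neg (not_lt.mpr hneg.le), if_neg hb]
end

section
/- For the tridiagonal QUBO chain, the unnormalized Half Partial Trace P_i(τ) = ∑_{x : x_0 = i} e^{−τ C(x)} equals the i-th entry of the vector obtained by the sequential contraction: P(τ) = diag(e^{−τ(w_{00}·i)})_i · (M_1 M_2 ⋯ M_{N−2} v), where (M_n)_{a,b} = e^{−τ(w_{n−1,n} a b + w_{nn} b)} and v_a = ∑_{b∈{0,1}} e^{−τ(w_{N−2,N−1} a b + w_{N−1,N−1} b)}. -/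
/-!
Give site `n ≥ 1` the bond `w_{n-1,n} x_{n-1} x_n` together with its own field term `w_{nn} x_n`.
Then `e^{-τ C(x)}` is `e^{-τ w_{00} x_0}` times the product of the transfer-matrix entries
`(M_n)_{x_{n-1}, x_n}`, and summing out `x_{N-1}`, then `x_{N-2}`, … is exactly applying
`M_1 ⋯ M_{N-1}` to the all-ones vector, the last factor giving `v = M_{N-1} 1`.
-/

open Finset Matrix

section TransferMatrix

variable {S R : Type*} [Fintype S]

theorem sum_ite_apply_zero_eq_sum_cons [DecidableEq S] [AddCommMonoid R] {k : ℕ} (a : S)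
    (f : (Fin (k + 1) → S) → R) :
    (∑ x : Fin (k + 1) → S, if x 0 = a then f x else 0) =
      ∑ y : Fin k → S, f (Fin.cons a y) := by
  rw [← (Fin.consEquiv fun _ => S).sum_comp, Fintype.sum_prod_type, sum_comm]
  simp [Fin.consEquiv]

theorem foldr_mulVec_one_eq_sum_prod [CommSemiring R] (K : ℕ → Matrix S S R) (m k : ℕ)
    (a : S) :
    (List.range' m k).foldr (fun n v => K n *ᵥ v) 1 a =
      ∑ y : Fin k → S,
        ∏ j : Fin k, K (m + j) ((Fin.cons a y : Fin (k + 1) → S) j.castSucc) (y j) := by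
  induction k generalizing m a with
  | zero => simp
  | succ k ih =>
    rw [List.range'_succ, List.foldr_cons, ← (Fin.consEquiv fun _ => S).sum_comp,
      Fintype.sum_prod_type]
    simp only [mulVec, dotProduct, ih, mul_sum, Fin.consEquiv_apply, Fin.prod_univ_succ]
    simp [add_assoc, add_comm 1]

theorem sum_ite_apply_zero_eq_foldr_mulVec_one [DecidableEq S] [CommSemiring R]
    (K : ℕ → Matrix S S R) (m k : ℕ) (a : S) :
    (∑ x : Fin (k + 1) → S,
        if x 0 = a then ∏ j : Fin k, K (m + j) (x j.castSucc) (x j.succ) else 0) =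
      (List.range' m k).foldr (fun n v => K n *ᵥ v) 1 a := by
  rw [sum_ite_apply_zero_eq_sum_cons, foldr_mulVec_one_eq_sum_prod]
  simp only [Fin.cons_succ]

theorem foldr_mulVec_one_range'_succ [CommSemiring R] (K : ℕ → Matrix S S R) (m k : ℕ) :
    (List.range' m (k + 1)).foldr (fun n v => K n *ᵥ v) 1 =
      (List.range' m k).foldr (fun n v => K n *ᵥ v) (fun a => ∑ b, K (m + k) a b) := by
  rw [List.range'_concat, List.foldr_append, one_mul]
  congr 1
  ext a
  simp only [List.foldr_cons, List.foldr_nil, mulVec, dotProduct, Pi.one_apply, mul_one]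

end TransferMatrix

theorem sum_diag_add_sum_superdiag_eq {R : Type*} [NonUnitalNonAssocSemiring R]
    (w : ℕ → ℕ → R) {k : ℕ} (z : Fin (k + 1) → R) :
    ∑ n : Fin (k + 1), w n n * z n + ∑ j : Fin k, w j (j + 1) * z j.castSucc * z j.succ =
      w 0 0 * z 0 +
        ∑ j : Fin k, (w j (j + 1) * z j.castSucc * z j.succ + w (j + 1) (j + 1) * z j.succ) := by
  rw [Fin.sum_univ_succ, sum_add_distrib]
  simp only [Fin.val_zero, Fin.val_succ]
  abel

theorem exp_neg_mul_energy_eq_mul_prod (w : ℕ → ℕ → ℝ) (τ : ℝ) {k : ℕ}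
    (z : Fin (k + 1) → ℝ) :
    Real.exp (-τ * (∑ n : Fin (k + 1), w n n * z n +
        ∑ j : Fin k, w j (j + 1) * z j.castSucc * z j.succ)) =
      Real.exp (-τ * (w 0 0 * z 0)) * ∏ j : Fin k,
        Real.exp (-τ * (w j (j + 1) * z j.castSucc * z j.succ + w (j + 1) (j + 1) * z j.succ)) := by
  rw [sum_diag_add_sum_superdiag_eq, mul_add, Real.exp_add, mul_sum, Real.exp_sum]

noncomputable def transferMatrix (w : ℕ → ℕ → ℝ) (τ : ℝ) (n : ℕ) : Matrix (Fin 2) (Fin 2) ℝ :=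
  of fun a b =>
    Real.exp (-τ * (w (n - 1) n * ((a : ℕ) : ℝ) * ((b : ℕ) : ℝ) + w n n * ((b : ℕ) : ℝ)))

/-- For the tridiagonal QUBO chain, the unnormalized Half Partial Trace with first
variable fixed to `i` equals the sequential transfer-matrix contraction: the
first-site factor times the iterated product of the `2 × 2` matrices
`(M_n)_{a,b} = e^{-τ(w_{n-1,n} a b + w_{n,n} b)}` applied to the last-site vector. -/
theorem tridiagonal_trace_matrix_product (N : ℕ) (hN : 2 ≤ N) (hN0 : 0 < N)
    (w : ℕ → ℕ → ℝ) (τ : ℝ) (i : Fin 2) :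
    (∑ x : Fin N → Fin 2,
        if x ⟨0, hN0⟩ = i then
          Real.exp (-τ * ((∑ n ∈ Finset.range N,
              w n n * ((x ⟨n % N, Nat.mod_lt n hN0⟩ : ℕ) : ℝ))
            + ∑ n ∈ Finset.range (N - 1),
                w n (n + 1) * ((x ⟨n % N, Nat.mod_lt n hN0⟩ : ℕ) : ℝ) *
                  ((x ⟨(n + 1) % N, Nat.mod_lt (n + 1) hN0⟩ : ℕ) : ℝ)))
        else 0)
      = Real.exp (-τ * (w 0 0 * ((i : ℕ) : ℝ))) *
          ((List.range' 1 (N - 2)).foldr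
            (fun n v => fun a : Fin 2 =>
              ∑ b : Fin 2,
                Real.exp (-τ * (w (n - 1) n * ((a : ℕ) : ℝ) * ((b : ℕ) : ℝ)
                  + w n n * ((b : ℕ) : ℝ))) * v b)
            (fun a : Fin 2 =>
              ∑ b : Fin 2,
                Real.exp (-τ * (w (N - 2) (N - 1) * ((a : ℕ) : ℝ) * ((b : ℕ) : ℝ)
                  + w (N - 1) (N - 1) * ((b : ℕ) : ℝ))))
            i) := by
  obtain ⟨k, rfl⟩ : ∃ k, N = k + 2 := ⟨N - 2, by omega⟩
  have hdiag (j : Fin (k + 2)) : (⟨j % (k + 2), Nat.mod_lt _ hN0⟩ : Fin (k + 2)) = j :=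
    Fin.ext (Nat.mod_eq_of_lt j.is_lt)
  have hleft (j : Fin (k + 1)) : (⟨j % (k + 2), Nat.mod_lt _ hN0⟩ : Fin (k + 2)) = j.castSucc :=
    Fin.ext (Nat.mod_eq_of_lt (by omega))
  have hright (j : Fin (k + 1)) : (⟨(j + 1) % (k + 2), Nat.mod_lt _ hN0⟩ : Fin (k + 2)) = j.succ :=
    Fin.ext (Nat.mod_eq_of_lt (by omega))
  calc _ = Real.exp (-τ * (w 0 0 * ((i : ℕ) : ℝ))) * ∑ x : Fin (k + 2) → Fin 2,
        if x 0 = i then ∏ j : Fin (k + 1), transferMatrix w τ (1 + j) (x j.castSucc) (x j.succ)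
        else 0 := by
        rw [mul_sum]
        refine sum_congr rfl fun x _ => ?_
        rw [mul_ite, mul_zero, Fin.zero_eta]
        split_ifs with hx
        · rw [Finset.sum_range, show k + 2 - 1 = k + 1 from rfl, Finset.sum_range]
          simp only [hdiag, hleft, hright]
          rw [exp_neg_mul_energy_eq_mul_prod, hx]
          simp [transferMatrix, add_comm 1]
        · rfl
    _ = _ := by
        rw [sum_ite_apply_zero_eq_foldr_mulVec_one, foldr_mulVec_one_range'_succ, add_comm 1 k]
        -- the statement spells out `transferMatrix w τ n *ᵥ v` entrywise
        rfl
end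

section
/- For a chain cost with unique minimizer, there exists a finite threshold τ* such that for all τ > τ*, the argmax of the Half Partial Trace vector P(τ) equals the optimal first coordinate: argmax_i ∑_{x : x_0 = i} e^{−τ C(x)} = x_opt,0. -/
/-!
Factor out the optimal weight: `∑_{x ≠ x_opt} e^{-τ C x} = e^{-τ C x_opt} ∑_{x ≠ x_opt} e^{-τ (C x - C x_opt)}`.
Every gap `C x - C x_opt` is positive, so the finite sum on the right tends to `0` as `τ → ∞` and is
eventually below `1`. Hence each fiber missing `x_opt` eventually weighs less than the single term
`e^{-τ C x_opt}` of the optimal fiber, and finitely many fibers give a common threshold.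
-/

open Real Filter Topology Finset

lemma tendsto_exp_neg_mul_atTop_nhds_zero {c : ℝ} (hc : 0 < c) :
    Tendsto (fun τ => exp (-τ * c)) atTop (𝓝 0) := by
  simpa [Function.comp_def, neg_mul] using
    tendsto_exp_neg_atTop_nhds_zero.comp (tendsto_id.atTop_mul_const hc)

lemma eventually_sum_exp_neg_mul_lt {ι : Type*} (s : Finset ι) (C : ι → ℝ) (a : ι)
    (ha : ∀ x ∈ s, C a < C x) :
    ∀ᶠ τ in atTop, ∑ x ∈ s, exp (-τ * C x) < exp (-τ * C a) := by
  have hlim : Tendsto (fun τ => ∑ x ∈ s, exp (-τ * (C x - C a))) atTop (𝓝 0) := by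
    simpa using tendsto_finsetSum s fun x hx =>
      tendsto_exp_neg_mul_atTop_nhds_zero (sub_pos.2 (ha x hx))
  filter_upwards [hlim.eventually (gt_mem_nhds one_pos)] with τ hτ
  have hfactor : ∑ x ∈ s, exp (-τ * C x) = exp (-τ * C a) * ∑ x ∈ s, exp (-τ * (C x - C a)) := by
    rw [mul_sum]
    refine sum_congr rfl fun x _ => ?_
    rw [← exp_add]
    ring_nf
  rw [hfactor]
  exact mul_lt_of_lt_one_right (exp_pos _) hτ

lemma eventually_fiber_sum_exp_neg_mul_lt {α β : Type*} [Fintype α] [DecidableEq β]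
    (f : α → β) (C : α → ℝ) (a : α) (ha : ∀ y, y ≠ a → C a < C y) {b : β} (hb : b ≠ f a) :
    ∀ᶠ τ in atTop, (∑ x, if f x = b then exp (-τ * C x) else 0)
      < ∑ x, if f x = f a then exp (-τ * C x) else 0 := by
  have hmin : ∀ x ∈ univ.filter (f · = b), C a < C x := fun x hx =>
    ha x (by rintro rfl; exact hb (mem_filter.1 hx).2.symm)
  filter_upwards [eventually_sum_exp_neg_mul_lt _ C a hmin] with τ hτ
  rw [← sum_filter, ← sum_filter]
  exact hτ.trans_le <| single_le_sum (f := fun x => exp (-τ * C x))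
    (fun x _ => (exp_pos _).le) (mem_filter.2 ⟨mem_univ a, rfl⟩)

lemma eventually_forall_fiber_sum_exp_neg_mul_lt {α β : Type*} [Fintype α] [DecidableEq β]
    [Finite β] (f : α → β) (C : α → ℝ) (a : α) (ha : ∀ y, y ≠ a → C a < C y) :
    ∀ᶠ τ in atTop, ∀ b, b ≠ f a → (∑ x, if f x = b then exp (-τ * C x) else 0)
      < ∑ x, if f x = f a then exp (-τ * C x) else 0 := by
  refine eventually_all.2 fun b => ?_
  by_cases hb : b = f a
  · exact Eventually.of_forall fun _ h => absurd hb h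
  · exact (eventually_fiber_sum_exp_neg_mul_lt f C a ha hb).mono fun _ h _ => h

/-- For a cost with unique minimizer, there is a finite threshold `τ*` such that for
all `τ > τ*` the argmax of the Half Partial Trace vector is the optimal first
coordinate. -/
theorem trace_argmax_threshold (N : ℕ) (D : Fin (N + 1) → ℕ)
    (C : (∀ n, Fin (D n)) → ℝ) (xopt : ∀ n, Fin (D n))
    (hopt : ∀ y, y ≠ xopt → C xopt < C y) :
    ∃ τstar : ℝ, ∀ τ > τstar, ∀ i : Fin (D 0), i ≠ xopt 0 →
      (∑ x : ∀ n, Fin (D n), if x 0 = i then Real.exp (-τ * C x) else 0)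
        < ∑ x : ∀ n, Fin (D n), if x 0 = xopt 0 then Real.exp (-τ * C x) else 0 := by
  obtain ⟨τstar, hτstar⟩ :=
    eventually_atTop.1 (eventually_forall_fiber_sum_exp_neg_mul_lt (· 0) C xopt hopt)
  exact ⟨τstar, fun τ hτ => hτstar τ hτ.le⟩
end

section
/- In the degenerate case the phased method can fail: there exists a cost function C on {0,1}² with exactly two global minimizers both having the same first-coordinate distribution, and a phase assignment γ, such that the phased trace ∑_{x : x_0 = i} e^{i γ_x} e^{−τ C(x)} vanishes identically in τ for the value of i containing the minimizers, so the argmax of the phased trace moduli does not identify an optimal first coordinate. -/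
/-!
Take the cost `C z = 0` if `z 0 = 0` and `1` otherwise: its minimizers are exactly `(0,0)` and
`(0,1)`, which form the whole fibre `z 0 = 0`. Giving `(0,1)` the phase `π` and every other point
the phase `0`, the two equal weights `e^{-τ·0}` on that fibre enter with opposite signs
`e^{iπ} = -1` and cancel for every `τ`, while the fibre `z 0 = 1` carries a sum of positive reals.
-/

open Complex Finset

section PhasedSum

variable {α : Type*} [Fintype α] (C γ : α → ℝ) (p : α → Prop) [DecidablePred p] (τ : ℝ)

theorem sum_ite_phase_eq_zero_of_antiphase_pair [DecidableEq α] {x y : α} (hxy : x ≠ y)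
    (hp : ∀ z, p z ↔ z = x ∨ z = y) (hC : C y = C x) (hγ : γ y = γ x + Real.pi) :
    ∑ z, (if p z then exp (I * γ z) * (Real.exp (-τ * C z) : ℂ) else 0) = 0 := by
  have hfibre : univ.filter p = {x, y} := by ext z; simp [hp]
  rw [← sum_filter, hfibre, sum_pair hxy, hC, hγ]
  push_cast
  rw [mul_add, exp_add, mul_comm I (Real.pi : ℂ), exp_pi_mul_I]
  ring

theorem norm_sum_ite_phase_pos_of_phase_eq_zero {x : α} (hx : p x) (hγ : ∀ z, p z → γ z = 0) :
    0 < ‖∑ z, (if p z then exp (I * γ z) * (Real.exp (-τ * C z) : ℂ) else 0)‖ := by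
  have hreal : ∀ z, (if p z then exp (I * γ z) * (Real.exp (-τ * C z) : ℂ) else 0) =
      ((if p z then Real.exp (-τ * C z) else 0 : ℝ) : ℂ) := by
    intro z
    split_ifs with hz
    · simp [hγ z hz]
    · simp
  have hnonneg : ∀ z ∈ univ, 0 ≤ (if p z then Real.exp (-τ * C z) else 0) := by
    intro z _
    split_ifs <;> positivity
  simp_rw [hreal, ← ofReal_sum, norm_real, Real.norm_of_nonneg (sum_nonneg hnonneg)]
  exact sum_pos' hnonneg ⟨x, mem_univ x, by simp [hx, Real.exp_pos]⟩

end PhasedSum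

def firstBitCost (z : Fin 2 → Fin 2) : ℝ := if z 0 = 0 then 0 else 1

noncomputable def antiphase (z : Fin 2 → Fin 2) : ℝ := if z = ![0, 1] then Real.pi else 0

theorem firstBitCost_nonneg (z : Fin 2 → Fin 2) : 0 ≤ firstBitCost z := by
  unfold firstBitCost
  split_ifs <;> norm_num

theorem apply_zero_eq_zero_iff (z : Fin 2 → Fin 2) : z 0 = 0 ↔ z = ![0, 0] ∨ z = ![0, 1] := by
  revert z
  decide

/-- In the degenerate case the phased method can fail: there is a cost on `{0,1}²`
with exactly two global minimizers sharing the same first coordinate, and a phase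
assignment, such that the phased Half Partial Trace on the minimizers' first value
vanishes identically in `τ`, while the other component has positive modulus, so the
argmax of the phased trace moduli does not identify an optimal first coordinate. -/
theorem phased_trace_degenerate_failure :
    ∃ (C : (Fin 2 → Fin 2) → ℝ) (γ : (Fin 2 → Fin 2) → ℝ)
      (x y : Fin 2 → Fin 2),
      x ≠ y ∧ x 0 = y 0 ∧ (∀ z, C x ≤ C z) ∧ (∀ z, C y ≤ C z) ∧
      (∀ z, (∀ u, C z ≤ C u) → z = x ∨ z = y) ∧
      (∀ τ : ℝ,
        (∑ z : Fin 2 → Fin 2,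
            if z 0 = x 0 then
              Complex.exp (Complex.I * (γ z : ℂ)) * (Real.exp (-τ * C z) : ℂ)
            else 0) = 0) ∧
      (∀ τ : ℝ, (0 : ℝ) <
        ‖∑ z : Fin 2 → Fin 2,
            if z 0 ≠ x 0 then
              Complex.exp (Complex.I * (γ z : ℂ)) * (Real.exp (-τ * C z) : ℂ)
            else 0‖) := by
  have hxy : (![0, 0] : Fin 2 → Fin 2) ≠ ![0, 1] := by decide
  have hx : firstBitCost ![0, 0] = 0 := by simp [firstBitCost]
  have hy : firstBitCost ![0, 1] = 0 := by simp [firstBitCost]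
  refine ⟨firstBitCost, antiphase, ![0, 0], ![0, 1], hxy, rfl,
    fun z => hx ▸ firstBitCost_nonneg z, fun z => hy ▸ firstBitCost_nonneg z, fun z hz => ?_,
    fun τ => ?_, fun τ => ?_⟩
  · have hz0 : z 0 = 0 := by
      by_contra h
      have h10 : (1 : ℝ) ≤ 0 := by simpa [firstBitCost, h] using hz ![0, 0]
      linarith
    exact (apply_zero_eq_zero_iff z).1 hz0
  · exact sum_ite_phase_eq_zero_of_antiphase_pair _ _ _ τ hxy apply_zero_eq_zero_iff
      (hy.trans hx.symm) (by simp [antiphase, hxy])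
  · refine norm_sum_ite_phase_pos_of_phase_eq_zero _ _ _ τ (x := ![1, 0]) (by decide) ?_
    intro z hz
    have hz' : z ≠ ![0, 1] := fun h => hz (by simp [h])
    simp [antiphase, hz']
end
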